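/- arXiv:2406.06113 — 5 statements merged into one kernel-verified Lean document; each statement's English description precedes it below -/
import Mathlib

section
/- Let U: X × [1,∞) → (0,∞) be uniform normalized with representation U(x,t) = U(x,T)·exp(∫_T^t η_x(u)/u du), where each η_x is differentiable and η_x(u) → γ(x) uniformly as u → ∞, with γ(x) ≤ γ^U for all x. Then there exist ε > 0 and T' > 0 such that for all s,t > T', y > 1, and x⁰, x¹ ∈ X: |U(x⁰,sy)/U(x⁰,s) − U(x¹,ty)/U(x¹,t)| ≤ 2(∫_s^∞ |η'_{x⁰}(l)| dl + ∫_t^∞ |η'_{x⁰}(l)| dl)·|log(s/t)|·y^(γ^U+ε) + (∫_t^∞ (|η'_{x⁰}(l)| + |η'_{x¹}(l)|) dl + |γ(x⁰) − γ(x¹)|)·log(y)·y^(γ^U+ε). -/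
open MeasureTheory Filter Set Topology

set_option maxHeartbeats 1000000

/-- |e^a - e^b| ≤ |a-b| e^c when a,b ≤ c. -/
lemma exp_diff_le_aux {a b c : ℝ} (ha : a ≤ b) (hb : b ≤ c) :
    |Real.exp a - Real.exp b| ≤ |a - b| * Real.exp c := by
  have h1 : Real.exp b - Real.exp a ≤ (b - a) * Real.exp b := by
    have h2 : Real.exp (a - b) ≥ 1 + (a - b) := by
      have := Real.add_one_le_exp (a - b); linarith
    have h3 : Real.exp a = Real.exp (a - b) * Real.exp b := by
      rw [← Real.exp_add]; ring_nf
    nlinarith [Real.exp_pos b]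
  have h4 : |Real.exp a - Real.exp b| = Real.exp b - Real.exp a := by
    rw [abs_sub_comm, abs_of_nonneg]; linarith [Real.exp_le_exp.2 ha]
  have h5 : |a - b| = b - a := by rw [abs_sub_comm, abs_of_nonneg]; linarith
  have h6 : Real.exp b ≤ Real.exp c := Real.exp_le_exp.2 hb
  rw [h4, h5]
  nlinarith [Real.exp_pos b, sub_nonneg.2 ha]

lemma exp_diff_le_aux' {a b c : ℝ} (ha : a ≤ c) (hb : b ≤ c) :
    |Real.exp a - Real.exp b| ≤ |a - b| * Real.exp c := by
  rcases le_total a b with h | h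
  · exact exp_diff_le_aux h hb
  · rw [abs_sub_comm (Real.exp a), abs_sub_comm a]
    exact exp_diff_le_aux h ha

/-- Second uniform Segers bound: comparison of normalized tail quantile ratios
at two covariate values and two base points. -/
theorem uniform_segers_bound_two
    {X : Type*} (U : X → ℝ → ℝ) (η η' : X → ℝ → ℝ) (γ : X → ℝ)
    (γL γU : ℝ) (hγL : 0 < γL)
    (hγ : ∀ x, γ x ∈ Set.Icc γL γU)
    (hUpos : ∀ x, ∀ t ≥ (1:ℝ), 0 < U x t)
    -- uniform normalized representation
    (T : ℝ) (hT : 1 ≤ T)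
    (hrep : ∀ x : X, ∀ t ≥ T,
      U x t = U x T * Real.exp (∫ u in Set.Ioc T t, η x u / u))
    -- η_x differentiable with derivative η'_x, absolutely integrable at infinity
    (hderiv : ∀ x, ∀ u ≥ T, HasDerivAt (η x) (η' x u) u)
    (hint : ∀ x, IntegrableOn (fun l => |η' x l|) (Set.Ioi T))
    -- η_x(u) → γ(x) uniformly in x
    (hη : ∀ ε > (0:ℝ), ∃ N : ℝ, ∀ u > N, ∀ x, |η x u - γ x| < ε) :
    ∃ ε > (0:ℝ), ∃ T' > (0:ℝ), ∀ s > T', ∀ t > T', ∀ y > (1:ℝ), ∀ x0 x1 : X,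
      |U x0 (s * y) / U x0 s - U x1 (t * y) / U x1 t| ≤
        2 * ((∫ l in Set.Ioi s, |η' x0 l|) + ∫ l in Set.Ioi t, |η' x0 l|) *
            |Real.log (s / t)| * y ^ (γU + ε)
        + ((∫ l in Set.Ioi t, |η' x0 l| + |η' x1 l|) + |γ x0 - γ x1|) *
            Real.log y * y ^ (γU + ε) := by
  obtain ⟨N, hN⟩ := hη 1 one_pos
  -- continuity of η x on Ici T
  have hcont : ∀ x, ContinuousOn (η x) (Ici T) := fun x u hu =>
    ((hderiv x u hu).continuousAt).continuousWithinAt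
  -- integrability of η' x on Ioi a for a ≥ T
  have hη'meas : ∀ x, AEStronglyMeasurable (η' x) (volume.restrict (Ioi T)) := by
    intro x
    refine (measurable_deriv (η x)).aestronglyMeasurable.congr ?_
    refine (ae_restrict_iff' measurableSet_Ioi).2 (ae_of_all _ fun u hu => ?_)
    exact (hderiv x u (le_of_lt hu)).deriv
  have hη'int : ∀ x, IntegrableOn (η' x) (Ioi T) := by
    intro x
    have := (integrable_norm_iff (hη'meas x)).1 ?_
    · exact this
    · simpa only [Real.norm_eq_abs, IntegrableOn] using hint x
  have hη'intA : ∀ x, ∀ a ≥ T, IntegrableOn (η' x) (Ioi a) := fun x a ha =>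
    (hη'int x).mono_set (Ioi_subset_Ioi ha)
  have hintA : ∀ x, ∀ a ≥ T, IntegrableOn (fun l => |η' x l|) (Ioi a) := fun x a ha =>
    (hint x).mono_set (Ioi_subset_Ioi ha)
  -- FTC
  have hFTC : ∀ x, ∀ a > T, ∀ b ≥ a, ∫ l in a..b, η' x l = η x b - η x a := by
    intro x a ha b hb
    refine intervalIntegral.integral_eq_sub_of_hasDerivAt (fun u hu => ?_) ?_
    · rw [uIcc_of_le hb] at hu
      exact hderiv x u (le_trans (le_of_lt ha) hu.1)
    · exact (intervalIntegrable_iff_integrableOn_Ioc_of_le hb).2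
        ((hη'intA x a (le_of_lt ha)).mono_set Ioc_subset_Ioi_self)
  -- limit of η
  have hlim : ∀ x, Tendsto (η x) atTop (𝓝 (γ x)) := by
    intro x
    rw [Metric.tendsto_atTop]
    intro ε hε
    obtain ⟨M, hM⟩ := hη ε hε
    exact ⟨M + 1, fun u hu => by
      rw [Real.dist_eq]; exact hM u (by linarith) x⟩
  -- gap formula
  have hgap : ∀ x, ∀ a > T, γ x - η x a = ∫ l in Ioi a, η' x l := by
    intro x a ha
    have h1 : Tendsto (fun b => ∫ l in a..b, η' x l) atTop
        (𝓝 (∫ l in Ioi a, η' x l)) :=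
      intervalIntegral_tendsto_integral_Ioi a (hη'intA x a ha.le) tendsto_id
    have h2 : Tendsto (fun b => ∫ l in a..b, η' x l) atTop (𝓝 (γ x - η x a)) := by
      have h3 : (fun b => ∫ l in a..b, η' x l) =ᶠ[atTop] fun b => η x b - η x a := by
        filter_upwards [eventually_ge_atTop a] with b hb
        exact hFTC x a ha b hb
      exact Tendsto.congr' h3.symm ((hlim x).sub_const (η x a))
    exact tendsto_nhds_unique h2 h1
  -- |η x a - γ x| ≤ ∫_{Ioi a} |η'|
  have habs : ∀ x, ∀ a > T, |η x a - γ x| ≤ ∫ l in Ioi a, |η' x l| := by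
    intro x a ha
    rw [abs_sub_comm, hgap x a ha]
    simpa only [Real.norm_eq_abs] using
      norm_integral_le_integral_norm (μ := volume.restrict (Ioi a)) (η' x)
  -- monotonicity of tail integrals
  have hmonoI : ∀ x, ∀ a ≥ T, ∀ b ≥ a,
      (∫ l in Ioi b, |η' x l|) ≤ ∫ l in Ioi a, |η' x l| := by
    intro x a ha b hb
    refine setIntegral_mono_set (hintA x a ha) ?_ ?_
    · exact ae_of_all _ fun l => abs_nonneg _
    · exact HasSubset.Subset.eventuallyLE (Ioi_subset_Ioi hb)
  have hInonneg : ∀ x, ∀ a : ℝ, 0 ≤ ∫ l in Ioi a, |η' x l| :=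
    fun x a => setIntegral_nonneg measurableSet_Ioi (fun l _ => abs_nonneg _)
  have hT0 : (0:ℝ) < T := lt_of_lt_of_le one_pos hT
  -- continuity of u ↦ η x u / u
  have hfcont : ∀ x : X, ∀ a b : ℝ, T ≤ a →
      ContinuousOn (fun u => η x u / u) (Icc a b) := by
    intro x a b ha
    refine ((hcont x).mono (fun u hu => le_trans ha hu.1)).div
      (continuous_id.continuousOn) (fun u hu => ?_)
    have h1 : T ≤ u := le_trans ha hu.1
    exact ne_of_gt (lt_of_lt_of_le hT0 h1)
  have hfii : ∀ x : X, ∀ a b : ℝ, T ≤ a → a ≤ b →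
      IntervalIntegrable (fun u => η x u / u) volume a b := by
    intro x a b ha hab
    apply ContinuousOn.intervalIntegrable
    rw [uIcc_of_le hab]
    exact hfcont x a b ha
  have hgii : ∀ M a b : ℝ, 0 < a → a ≤ b →
      IntervalIntegrable (fun u => M / u) volume a b := by
    intro M a b ha hab
    apply ContinuousOn.intervalIntegrable
    rw [uIcc_of_le hab]
    exact (continuousOn_const.div (continuous_id.continuousOn)
      (fun u hu => ne_of_gt (lt_of_lt_of_le ha hu.1)))
  have hlogM : ∀ M a b : ℝ, 0 < a → 0 < b →
      ∫ l in a..b, M / l = M * Real.log (b / a) := by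
    intro M a b ha hb
    simp only [div_eq_mul_inv]
    rw [intervalIntegral.integral_const_mul, integral_inv_of_pos ha hb, div_eq_mul_inv]
  -- ratio representation
  have hratio : ∀ x : X, ∀ c, T < c → ∀ d, c ≤ d →
      U x d / U x c = Real.exp (∫ u in c..d, η x u / u) := by
    intro x c hc d hd
    have hcT : T ≤ c := hc.le
    have hdT : T ≤ d := le_trans hcT hd
    have h1 := hrep x c hcT
    have h2 := hrep x d hdT
    have hadd := intervalIntegral.integral_add_adjacent_intervals
      (hfii x T c le_rfl hcT) (hfii x c d hcT hd)
    have hUT : U x T ≠ 0 := ne_of_gt (hUpos x T hT)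
    rw [h1, h2, ← intervalIntegral.integral_of_le hcT,
      ← intervalIntegral.integral_of_le hdT]
    rw [mul_div_mul_left _ _ hUT, ← Real.exp_sub]
    congr 1
    linarith
  -- upper bound on the exponent integral
  have hIbound : ∀ x : X, ∀ c, max T N < c → ∀ y : ℝ, 1 < y →
      (∫ u in c..(c*y), η x u / u) ≤ (γU + 1) * Real.log y := by
    intro x c hc y hy
    have hcT : T < c := lt_of_le_of_lt (le_max_left _ _) hc
    have hcN : N < c := lt_of_le_of_lt (le_max_right _ _) hc
    have hc0 : 0 < c := lt_trans hT0 hcT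
    have hccy : c ≤ c * y := le_mul_of_one_le_right hc0.le hy.le
    calc (∫ u in c..c*y, η x u / u) ≤ ∫ u in c..c*y, (γU + 1) / u := by
          refine intervalIntegral.integral_mono_on hccy
            (hfii x c (c*y) hcT.le hccy) (hgii (γU+1) c (c*y) hc0 hccy)
            fun u hu => ?_
          have hu0 : 0 < u := lt_of_lt_of_le hc0 hu.1
          have h1 := hN u (lt_of_lt_of_le hcN hu.1) x
          have h2 := (hγ x).2
          have h3 : η x u ≤ γU + 1 := by
            have h4 := (abs_lt.1 h1).2; linarith
          exact div_le_div_of_nonneg_right h3 hu0.le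
      _ = (γU+1) * Real.log ((c*y)/c) :=
          hlogM (γU+1) c (c*y) hc0 (lt_of_lt_of_le hc0 hccy)
      _ = (γU+1) * Real.log y := by rw [mul_div_cancel_left₀ _ hc0.ne']
  -- Step D : same covariate, different base points
  have hstepD : ∀ x : X, ∀ t s : ℝ, T < t → t ≤ s → ∀ y : ℝ, 1 < y →
      |(∫ u in s..(s*y), η x u / u) - ∫ u in t..(t*y), η x u / u| ≤
        (∫ l in Ioi t, |η' x l|) * Real.log (s / t) := by
    intro x t s htT hts y hy
    have ht0 : 0 < t := lt_trans hT0 htT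
    have hs0 : 0 < s := lt_of_lt_of_le ht0 hts
    have hy0 : 0 < y := lt_trans one_pos hy
    have htty : t ≤ t*y := le_mul_of_one_le_right ht0.le hy.le
    have hssy : s ≤ s*y := le_mul_of_one_le_right hs0.le hy.le
    have htysy : t*y ≤ s*y := mul_le_mul_of_nonneg_right hts hy0.le
    have hsT : T ≤ s := le_trans htT.le hts
    have htyT : T ≤ t*y := le_trans htT.le htty
    set f := fun u => η x u / u with hf
    have hadd1 := intervalIntegral.integral_add_adjacent_intervals
      (hfii x t s htT.le hts) (hfii x s (s*y) hsT hssy)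
    have hadd2 := intervalIntegral.integral_add_adjacent_intervals
      (hfii x t (t*y) htT.le htty) (hfii x (t*y) (s*y) htyT htysy)
    have key : (∫ u in s..(s*y), f u) - ∫ u in t..(t*y), f u
        = (∫ u in (t*y)..(s*y), f u) - ∫ u in t..s, f u := by linarith
    have hcv : (∫ u in (t*y)..(s*y), f u) = ∫ l in t..s, η x (l*y) / l := by
      have h1 : ∫ l in t..s, f (l*y) = y⁻¹ • ∫ u in (t*y)..(s*y), f u :=
        intervalIntegral.integral_comp_mul_right f hy0.ne'
      have h2 : (∫ u in (t*y)..(s*y), f u) = y * ∫ l in t..s, f (l*y) := by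
        rw [h1, smul_eq_mul]; field_simp
      rw [h2, ← intervalIntegral.integral_const_mul]
      refine intervalIntegral.integral_congr fun l hl => ?_
      rw [uIcc_of_le hts] at hl
      have hl0 : 0 < l := lt_of_lt_of_le ht0 hl.1
      show y * (η x (l*y) / (l*y)) = η x (l*y) / l
      field_simp
    -- continuity of the integrand of the combined integral
    have hcomp : ContinuousOn (fun l => η x (l*y)) (Icc t s) := by
      refine (hcont x).comp ((continuous_id.mul continuous_const).continuousOn)
        fun l hl => ?_
      have h1 : T ≤ l := le_trans htT.le hl.1
      exact le_trans h1 (le_mul_of_one_le_right (le_trans hT0.le h1) hy.le)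
    have hcont3 : ContinuousOn (fun l => (η x (l*y) - η x l) / l) (Icc t s) := by
      refine ((hcomp.sub ((hcont x).mono (fun l hl => le_trans htT.le hl.1))).div
        (continuous_id.continuousOn) (fun l hl => ?_))
      exact ne_of_gt (lt_of_lt_of_le ht0 hl.1)
    have hcont4 : ContinuousOn (fun l => |(η x (l*y) - η x l) / l|) (Icc t s) :=
      hcont3.abs
    have hgl : IntervalIntegrable (fun l => η x (l*y) / l) volume t s := by
      apply ContinuousOn.intervalIntegrable
      rw [uIcc_of_le hts]
      exact hcomp.div (continuous_id.continuousOn)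
        (fun l hl => ne_of_gt (lt_of_lt_of_le ht0 hl.1))
    have hsub : (∫ l in t..s, η x (l*y) / l) - ∫ u in t..s, f u
        = ∫ l in t..s, (η x (l*y) - η x l) / l := by
      rw [← intervalIntegral.integral_sub hgl (hfii x t s htT.le hts)]
      exact intervalIntegral.integral_congr fun l hl => (sub_div _ _ _).symm
    rw [key, hcv, hsub]
    set M := ∫ l in Ioi t, |η' x l| with hM
    calc |∫ l in t..s, (η x (l*y) - η x l) / l|
        ≤ ∫ l in t..s, |(η x (l*y) - η x l) / l| :=
          intervalIntegral.abs_integral_le_integral_abs hts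
      _ ≤ ∫ l in t..s, M / l := by
          refine intervalIntegral.integral_mono_on hts ?_ (hgii M t s ht0 hts)
            fun l hl => ?_
          · apply ContinuousOn.intervalIntegrable
            rw [uIcc_of_le hts]; exact hcont4
          · have hl0 : 0 < l := lt_of_lt_of_le ht0 hl.1
            have hlT : T < l := lt_of_lt_of_le htT hl.1
            have hlly : l ≤ l*y := le_mul_of_one_le_right hl0.le hy.le
            have h1 : η x (l*y) - η x l = ∫ u in l..(l*y), η' x u :=
              (hFTC x l hlT (l*y) hlly).symm
            have h2 : |η x (l*y) - η x l| ≤ M := by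
              rw [h1]
              calc |∫ u in l..(l*y), η' x u| ≤ ∫ u in l..(l*y), |η' x u| :=
                    intervalIntegral.abs_integral_le_integral_abs hlly
                _ = ∫ u in Ioc l (l*y), |η' x u| :=
                    intervalIntegral.integral_of_le hlly
                _ ≤ M := by
                    refine setIntegral_mono_set (hintA x t htT.le)
                      (ae_of_all _ fun u => abs_nonneg _) ?_
                    refine HasSubset.Subset.eventuallyLE fun u hu => ?_
                    exact lt_of_le_of_lt hl.1 hu.1
            rw [abs_div, abs_of_pos hl0]
            exact div_le_div_of_nonneg_right h2 hl0.le
      _ = M * Real.log (s / t) := hlogM M t s ht0 hs0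
  -- final assembly
  refine ⟨1, one_pos, max T N, lt_of_lt_of_le hT0 (le_max_left _ _), ?_⟩
  intro s hs t ht y hy x0 x1
  have hsT : T < s := lt_of_le_of_lt (le_max_left _ _) hs
  have htT : T < t := lt_of_le_of_lt (le_max_left _ _) ht
  have hs0 : 0 < s := lt_trans hT0 hsT
  have ht0 : 0 < t := lt_trans hT0 htT
  have hy0 : 0 < y := lt_trans one_pos hy
  have hssy : s ≤ s*y := le_mul_of_one_le_right hs0.le hy.le
  have htty : t ≤ t*y := le_mul_of_one_le_right ht0.le hy.le
  have hlogy : 0 ≤ Real.log y := Real.log_nonneg hy.le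
  set A := ∫ l in Ioi s, |η' x0 l| with hA
  set B := ∫ l in Ioi t, |η' x0 l| with hB
  set C := ∫ l in Ioi t, |η' x1 l| with hC
  set D := |γ x0 - γ x1| with hD
  set I0 := ∫ u in s..(s*y), η x0 u / u with hI0
  set I1 := ∫ u in t..(t*y), η x1 u / u with hI1
  set I2 := ∫ u in t..(t*y), η x0 u / u with hI2
  have hr0 : U x0 (s*y) / U x0 s = Real.exp I0 := hratio x0 s hsT (s*y) hssy
  have hr1 : U x1 (t*y) / U x1 t = Real.exp I1 := hratio x1 t htT (t*y) htty
  -- bounds on exponents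
  have hb0 : I0 ≤ (γU + 1) * Real.log y := hIbound x0 s hs y hy
  have hb1 : I1 ≤ (γU + 1) * Real.log y := hIbound x1 t ht y hy
  -- y^(γU+1) = exp((γU+1) log y)
  have hyp : y ^ (γU + (1:ℝ)) = Real.exp ((γU + 1) * Real.log y) := by
    rw [Real.rpow_def_of_pos hy0, mul_comm]
  have hypnn : (0:ℝ) ≤ y ^ (γU + (1:ℝ)) := Real.rpow_nonneg hy0.le _
  -- |I0 - I2| ≤ (A + B) |log (s/t)|
  have hd1 : |I0 - I2| ≤ (A + B) * |Real.log (s / t)| := by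
    rcases le_total t s with h | h
    · have h1 := hstepD x0 t s htT h y hy
      have h2 : |Real.log (s/t)| = Real.log (s/t) := by
        rw [abs_of_nonneg]
        exact Real.log_nonneg ((one_le_div ht0).2 h)
      rw [h2]
      have h3 : 0 ≤ Real.log (s/t) := Real.log_nonneg ((one_le_div ht0).2 h)
      nlinarith [hInonneg x0 s]
    · have h1 := hstepD x0 s t hsT h y hy
      have h3 : 0 ≤ Real.log (t/s) := Real.log_nonneg ((one_le_div hs0).2 h)
      have h2 : |Real.log (s/t)| = Real.log (t/s) := by
        have h4 : Real.log (s/t) = - Real.log (t/s) := by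
          rw [← Real.log_inv, inv_div]
        rw [h4, abs_neg, abs_of_nonneg h3]
      rw [abs_sub_comm] at h1
      rw [h2]
      nlinarith [hInonneg x0 t]
  -- |I2 - I1| ≤ (B + C + D) log y
  have hd2 : |I2 - I1| ≤ (B + C + D) * Real.log y := by
    have hsub : I2 - I1 = ∫ u in t..(t*y), (η x0 u - η x1 u) / u := by
      rw [← intervalIntegral.integral_sub (hfii x0 t (t*y) htT.le htty)
        (hfii x1 t (t*y) htT.le htty)]
      exact intervalIntegral.integral_congr fun u hu => (sub_div _ _ _).symm
    have hcont5 : ContinuousOn (fun u => |(η x0 u - η x1 u) / u|) (Icc t (t*y)) := by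
      refine ContinuousOn.abs ?_
      refine (((hcont x0).mono (fun u hu => le_trans htT.le hu.1)).sub
        ((hcont x1).mono (fun u hu => le_trans htT.le hu.1))).div
        (continuous_id.continuousOn) (fun u hu => ?_)
      exact ne_of_gt (lt_of_lt_of_le ht0 hu.1)
    rw [hsub]
    calc |∫ u in t..(t*y), (η x0 u - η x1 u) / u|
        ≤ ∫ u in t..(t*y), |(η x0 u - η x1 u) / u| :=
          intervalIntegral.abs_integral_le_integral_abs htty
      _ ≤ ∫ u in t..(t*y), (B + C + D) / u := by
          refine intervalIntegral.integral_mono_on htty ?_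
            (hgii (B+C+D) t (t*y) ht0 htty) fun u hu => ?_
          · apply ContinuousOn.intervalIntegrable
            rw [uIcc_of_le htty]; exact hcont5
          · have hu0 : 0 < u := lt_of_lt_of_le ht0 hu.1
            have huT : T < u := lt_of_lt_of_le htT hu.1
            have h1 : |η x0 u - γ x0| ≤ B := le_trans (habs x0 u huT)
              (hmonoI x0 t htT.le u hu.1)
            have h2 : |η x1 u - γ x1| ≤ C := le_trans (habs x1 u huT)
              (hmonoI x1 t htT.le u hu.1)
            have h3 : |η x0 u - η x1 u| ≤ B + C + D := by
              have h4 : η x0 u - η x1 u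
                  = (η x0 u - γ x0) - (η x1 u - γ x1) + (γ x0 - γ x1) := by ring
              rw [h4]
              calc |(η x0 u - γ x0) - (η x1 u - γ x1) + (γ x0 - γ x1)|
                  ≤ |(η x0 u - γ x0) - (η x1 u - γ x1)| + |γ x0 - γ x1| :=
                    abs_add_le _ _
                _ ≤ |η x0 u - γ x0| + |η x1 u - γ x1| + D :=
                    add_le_add_left (abs_sub _ _) _
                _ ≤ B + C + D := by linarith
            rw [abs_div, abs_of_pos hu0]
            exact div_le_div_of_nonneg_right h3 hu0.le
      _ = (B + C + D) * Real.log ((t*y)/t) :=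
          hlogM _ t (t*y) ht0 (lt_of_lt_of_le ht0 htty)
      _ = (B + C + D) * Real.log y := by rw [mul_div_cancel_left₀ _ ht0.ne']
  -- combine
  rw [hr0, hr1]
  have hmain : |Real.exp I0 - Real.exp I1| ≤ |I0 - I1| * y ^ (γU + (1:ℝ)) := by
    rw [hyp]
    exact exp_diff_le_aux' hb0 hb1
  have htri : |I0 - I1| ≤ (A + B) * |Real.log (s/t)| + (B + C + D) * Real.log y := by
    calc |I0 - I1| = |(I0 - I2) + (I2 - I1)| := by ring_nf
      _ ≤ |I0 - I2| + |I2 - I1| := abs_add_le _ _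
      _ ≤ _ := add_le_add hd1 hd2
  have hBC : (∫ l in Ioi t, |η' x0 l| + |η' x1 l|) = B + C := by
    rw [hB, hC, ← integral_add (hintA x0 t htT.le) (hintA x1 t htT.le)]
  rw [hBC]
  have habsnn : (0:ℝ) ≤ |Real.log (s/t)| := abs_nonneg _
  have hABnn : (0:ℝ) ≤ A + B := add_nonneg (hInonneg x0 s) (hInonneg x0 t)
  have hBCDnn : (0:ℝ) ≤ B + C + D :=
    add_nonneg (add_nonneg (hInonneg x0 t) (hInonneg x1 t)) (abs_nonneg _)
  have hfin : |Real.exp I0 - Real.exp I1|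
      ≤ ((A + B) * |Real.log (s/t)| + (B + C + D) * Real.log y) * y ^ (γU + (1:ℝ)) := by
    refine le_trans hmain ?_
    exact mul_le_mul_of_nonneg_right htri hypnn
  refine le_trans hfin ?_
  have h1 : (A + B) * |Real.log (s/t)| * y ^ (γU + (1:ℝ)) ≥ 0 := by positivity
  nlinarith [mul_nonneg (mul_nonneg hABnn habsnn) hypnn]
end

section
/- Suppose for each x ∈ X the function U(x,·) satisfies the second-order condition: lim_{t→∞} [U(x,ty)/U(x,t) − y^{γ(x)}]/a_x(t) = y^{γ(x)} h_{ρ(x)}(y) uniformly in x, for y ≥ 1, where a_x(t) → 0, ρ(x) ≤ 0, h_ρ(y) = log y if ρ = 0 and (y^ρ − 1)/ρ otherwise, and assume ρ* := sup_x ρ(x) < 0. Then for every family of positive functions a_x with the above property, there exist T > 1 and K > 0 such that |U(x,ty)/U(x,t) − y^{γ(x)}| ≤ K·y^{γ(x)}·|a_x(t)| for all t ≥ T, y ≥ 1, and x ∈ X. -/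
open MeasureTheory Filter Set

/-- The second-order auxiliary function `h_ρ`. -/
noncomputable def hrho (ρ y : ℝ) : ℝ :=
  if ρ = 0 then Real.log y else (y ^ ρ - 1) / ρ

/-- Second-order uniform Segers bound. -/
theorem second_order_uniform_segers_bound
    {X : Type*} (U : X → ℝ → ℝ) (γ ρ : X → ℝ) (a : X → ℝ → ℝ)
    (hγpos : ∀ x, 0 < γ x)
    (hρ : ∀ x, ρ x ≤ 0)
    (hρstar : ∃ ρstar < (0:ℝ), ∀ x, ρ x ≤ ρstar)
    (hapos : ∀ x t, 0 < a x t)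
    -- a_x(t) → 0 uniformly
    (ha0 : ∀ ε > (0:ℝ), ∃ T : ℝ, ∀ t > T, ∀ x, |a x t| < ε)
    -- uniform second-order condition
    (h2nd : ∀ ε > (0:ℝ), ∃ T : ℝ, ∀ t > T, ∀ x : X, ∀ y ≥ (1:ℝ),
      |(U x (t * y) / U x t - y ^ γ x) / a x t - y ^ γ x * hrho (ρ x) y|
        ≤ ε * y ^ γ x) :
    ∃ T > (1:ℝ), ∃ K > (0:ℝ), ∀ t ≥ T, ∀ y ≥ (1:ℝ), ∀ x : X,
      |U x (t * y) / U x t - y ^ γ x| ≤ K * y ^ γ x * |a x t| := by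
  obtain ⟨ρs, hρs, hle⟩ := hρstar
  obtain ⟨T₀, hT₀⟩ := h2nd 1 one_pos
  refine ⟨max T₀ 1 + 1, by simp [lt_add_of_le_of_pos, le_max_right], 1 + 1 / (-ρs),
    by have := one_div_pos.mpr (show (0:ℝ) < -ρs by linarith); linarith, ?_⟩
  intro t ht y hy x
  have hρx : ρ x < 0 := lt_of_le_of_lt (hle x) hρs
  have ht' : t > T₀ := by
    have : T₀ < max T₀ 1 + 1 := lt_of_le_of_lt (le_max_left _ _) (by linarith)
    linarith
  have hbig := hT₀ t ht' x y hy
  have hypos : (0:ℝ) < y := lt_of_lt_of_le one_pos hy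
  have hyγ : (0:ℝ) < y ^ γ x := Real.rpow_pos_of_pos hypos _
  -- bound on |hrho|
  have hryρ : (0:ℝ) < y ^ ρ x := Real.rpow_pos_of_pos hypos _
  have hyρle : y ^ ρ x ≤ 1 := Real.rpow_le_one_of_one_le_of_nonpos hy (hρ x)
  have hh : |hrho (ρ x) y| ≤ 1 / (-ρs) := by
    rw [hrho, if_neg hρx.ne]
    rw [abs_div, abs_of_neg hρx, abs_of_nonpos (by linarith : y ^ ρ x - 1 ≤ 0)]
    have h1 : -(y ^ ρ x - 1) ≤ 1 := by linarith
    have h2 : -ρs ≤ -ρ x := by linarith [hle x]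
    have h3 : (0:ℝ) < -ρs := by linarith
    calc -(y ^ ρ x - 1) / -ρ x ≤ 1 / -ρ x := by
          apply div_le_div_of_nonneg_right h1 (by linarith) |>.trans_eq rfl
        _ ≤ 1 / -ρs := by
          apply one_div_le_one_div_of_le h3 h2
  have hane : a x t ≠ 0 := (hapos x t).ne'
  have key : |(U x (t * y) / U x t - y ^ γ x) / a x t| ≤ (1 + 1 / (-ρs)) * y ^ γ x := by
    calc |(U x (t * y) / U x t - y ^ γ x) / a x t|
        ≤ |(U x (t * y) / U x t - y ^ γ x) / a x t - y ^ γ x * hrho (ρ x) y|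
            + |y ^ γ x * hrho (ρ x) y| := by
          have := abs_sub_abs_le_abs_sub ((U x (t * y) / U x t - y ^ γ x) / a x t)
            (y ^ γ x * hrho (ρ x) y)
          have := abs_sub ((U x (t * y) / U x t - y ^ γ x) / a x t)
            (y ^ γ x * hrho (ρ x) y)
          nlinarith [abs_nonneg (y ^ γ x * hrho (ρ x) y)]
      _ ≤ 1 * y ^ γ x + y ^ γ x * (1 / (-ρs)) := by
          refine add_le_add hbig ?_
          rw [abs_mul, abs_of_pos hyγ]
          exact mul_le_mul_of_nonneg_left hh hyγ.le
      _ = (1 + 1 / (-ρs)) * y ^ γ x := by ring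
  have := mul_le_mul_of_nonneg_right key (abs_nonneg (a x t))
  rwa [abs_div, div_mul_cancel₀ _ (abs_ne_zero.mpr hane)] at this
end

section
/- Let (Y,X) be a random vector with X ∈ X and, for each x, P(Y > t | X = x) = L(x,t)·t^{−1/γ(x)} where γ(x) ∈ [γ_L, γ_U] ⊂ (0,∞) and the family L(x,·) is uniformly bounded above and uniformly bounded away from 0 for large t. Let B = {x : γ(x) = γ^U := sup_y γ(y)} and assume P(X ∈ B) > 0. Then for any measurable A ⊂ X \ B with P(X ∈ A) > 0 and γ_A := sup_{x∈A} γ(x) < γ^U, one has P(X ∈ A | Y > t) → 0 as t → ∞. -/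
open MeasureTheory Filter Set

/-- Extreme covariate concentration: the conditional law of the covariate given
a large response puts vanishing mass on sets where the tail index stays below
the maximal one.  Here `μ` is the law of `X` and
`P(Y > t | X = x) = L x t · t^(−1/γ x)`, so that
`P(X ∈ A | Y > t) = (∫_A L x t · t^(−1/γ x) dμ) / (∫ L x t · t^(−1/γ x) dμ)`. -/
theorem covariate_concentration
    {𝒳 : Type*} [MeasurableSpace 𝒳] (μ : Measure 𝒳) [IsProbabilityMeasure μ]
    (γ : 𝒳 → ℝ) (L : 𝒳 → ℝ → ℝ)
    (γL γU : ℝ) (hγL : 0 < γL)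
    (hγ : ∀ x, γ x ∈ Set.Icc γL γU)
    (hγmeas : Measurable γ)
    (hLmeas : ∀ t, Measurable fun x => L x t)
    -- L uniformly bounded above and away from 0 for large t
    (hLbdd : ∃ T₀ : ℝ, ∃ m > (0:ℝ), ∃ M : ℝ, ∀ x, ∀ t ≥ T₀, m ≤ L x t ∧ L x t ≤ M)
    -- the set of maximal tail index has positive probability
    (hB : 0 < μ {x | γ x = γU})
    (A : Set 𝒳) (hAmeas : MeasurableSet A)
    (hA : A ⊆ {x | γ x = γU}ᶜ) (hApos : 0 < μ A)
    (γA : ℝ) (hγA : γA < γU) (hγAbound : ∀ x ∈ A, γ x ≤ γA) :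
    Tendsto (fun t : ℝ =>
        (∫ x in A, L x t * t ^ (-1 / γ x) ∂μ) /
          ∫ x, L x t * t ^ (-1 / γ x) ∂μ)
      atTop (nhds 0) := by
  obtain ⟨T₀, m, hm, M, hLb⟩ := hLbdd
  obtain ⟨x₀, hx₀⟩ := nonempty_of_measure_ne_zero hApos.ne'
  have hγU : 0 < γU := hγL.trans_le ((hγ x₀).1.trans (hγ x₀).2)
  have hγApos : 0 < γA := lt_of_lt_of_le (lt_of_lt_of_le hγL (hγ x₀).1) (hγAbound x₀ hx₀)
  have hmM : m ≤ M := le_trans (hLb x₀ T₀ le_rfl).1 (hLb x₀ T₀ le_rfl).2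
  set B := {x | γ x = γU} with hBdef
  have hBmeas : MeasurableSet B := hγmeas (measurableSet_singleton γU)
  have hBpos : 0 < (μ B).toReal := by
    refine ENNReal.toReal_pos hB.ne' (measure_ne_top μ B)
  set C : ℝ := M / (m * (μ B).toReal) with hCdef
  have hC : 0 < C := div_pos (lt_of_lt_of_le hm hmM) (mul_pos hm hBpos)
  -- target comparison function
  have hg : Tendsto (fun t : ℝ => C * t ^ (1 / γU - 1 / γA)) atTop (nhds 0) := by
    have hexp : 0 < 1 / γA - 1 / γU :=
      sub_pos.2 (by exact one_div_lt_one_div_of_lt hγApos hγA)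
    have := (tendsto_rpow_neg_atTop hexp).const_mul C
    simpa [neg_sub] using this
  apply squeeze_zero' ?_ ?_ hg
  · -- eventual nonnegativity
    filter_upwards [eventually_ge_atTop (max T₀ 1)] with t ht
    have ht1 : (1:ℝ) ≤ t := le_trans (le_max_right _ _) ht
    have ht0 : (0:ℝ) < t := lt_of_lt_of_le one_pos ht1
    have htT : T₀ ≤ t := le_trans (le_max_left _ _) ht
    have hnum : 0 ≤ ∫ x in A, L x t * t ^ (-1 / γ x) ∂μ := by
      refine integral_nonneg fun x => ?_
      exact mul_nonneg (le_trans hm.le (hLb x t htT).1) (Real.rpow_nonneg ht0.le _)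
    have hden : 0 ≤ ∫ x, L x t * t ^ (-1 / γ x) ∂μ := by
      refine integral_nonneg fun x => ?_
      exact mul_nonneg (le_trans hm.le (hLb x t htT).1) (Real.rpow_nonneg ht0.le _)
    exact div_nonneg hnum hden
  · -- eventual upper bound
    filter_upwards [eventually_ge_atTop (max T₀ 1)] with t ht
    have ht1 : (1:ℝ) ≤ t := le_trans (le_max_right _ _) ht
    have ht0 : (0:ℝ) < t := lt_of_lt_of_le one_pos ht1
    have htT : T₀ ≤ t := le_trans (le_max_left _ _) ht
    set f : 𝒳 → ℝ := fun x => L x t * t ^ (-1 / γ x) with hfdef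
    have hfmeas : Measurable f := by
      have heq : f = fun x => L x t * Real.exp (Real.log t * (-1 / γ x)) := by
        funext x
        show L x t * t ^ (-1 / γ x) = _
        rw [Real.rpow_def_of_pos ht0]
      rw [heq]
      exact (hLmeas t).mul ((measurable_const.mul (measurable_const.div hγmeas)).exp)
    have hfnonneg : ∀ x, 0 ≤ f x := fun x =>
      mul_nonneg (le_trans hm.le (hLb x t htT).1) (Real.rpow_nonneg ht0.le _)
    have hfbound : ∀ x, f x ≤ M := by
      intro x
      have h1 : t ^ (-1 / γ x) ≤ 1 := by
        apply Real.rpow_le_one_of_one_le_of_nonpos ht1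
        have := lt_of_lt_of_le hγL (hγ x).1
        rw [neg_div]
        exact neg_nonpos.2 (le_of_lt (div_pos one_pos this))
      calc f x ≤ M * t ^ (-1 / γ x) :=
            mul_le_mul_of_nonneg_right (hLb x t htT).2 (Real.rpow_nonneg ht0.le _)
        _ ≤ M * 1 := mul_le_mul_of_nonneg_left h1 (le_trans hm.le hmM)
        _ = M := mul_one M
    have hfint : Integrable f μ := by
      refine (integrable_const M).mono' hfmeas.aestronglyMeasurable ?_
      filter_upwards with x
      rw [Real.norm_eq_abs, abs_of_nonneg (hfnonneg x)]
      exact hfbound x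
    -- numerator bound
    have hnum : (∫ x in A, f x ∂μ) ≤ M * t ^ (-1 / γA) := by
      have step : (∫ x in A, f x ∂μ) ≤ ∫ _x in A, M * t ^ (-1 / γA) ∂μ := by
        refine setIntegral_mono_on (hfint.integrableOn) (integrableOn_const ?_) hAmeas ?_
        · exact (lt_of_le_of_lt (measure_mono (subset_univ A)) (by simp [measure_lt_top])).ne
        · intro x hx
          have hγx : γL ≤ γ x := (hγ x).1
          have hγx0 : 0 < γ x := lt_of_lt_of_le hγL hγx
          have hexp : -1 / γ x ≤ -1 / γA := by
            rw [neg_div, neg_div, neg_le_neg_iff]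
            exact one_div_le_one_div_of_le hγx0 (hγAbound x hx)
          calc f x ≤ M * t ^ (-1 / γ x) :=
                mul_le_mul_of_nonneg_right (hLb x t htT).2 (Real.rpow_nonneg ht0.le _)
            _ ≤ M * t ^ (-1 / γA) :=
                mul_le_mul_of_nonneg_left (Real.rpow_le_rpow_of_exponent_le ht1 hexp)
                  (le_trans hm.le hmM)
      have : ∫ _x in A, M * t ^ (-1 / γA) ∂μ = (μ A).toReal * (M * t ^ (-1 / γA)) := by
        simp [setIntegral_const, smul_eq_mul, Measure.real]
      rw [this] at step
      refine le_trans step ?_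
      have hμA1 : (μ A).toReal ≤ 1 := by
        have h1 : μ A ≤ 1 := prob_le_one
        calc (μ A).toReal ≤ (1 : ENNReal).toReal := ENNReal.toReal_mono ENNReal.one_ne_top h1
          _ = 1 := ENNReal.toReal_one
      nlinarith [Real.rpow_nonneg ht0.le (-1/γA), mul_nonneg (le_trans hm.le hmM) (Real.rpow_nonneg ht0.le (-1/γA))]
    -- denominator bound
    have hden : m * (μ B).toReal * t ^ (-1 / γU) ≤ ∫ x, f x ∂μ := by
      have step1 : (∫ _x in B, m * t ^ (-1 / γU) ∂μ) ≤ ∫ x in B, f x ∂μ := by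
        refine setIntegral_mono_on (integrableOn_const ?_) hfint.integrableOn hBmeas ?_
        · exact (lt_of_le_of_lt (measure_mono (subset_univ B)) (by simp [measure_lt_top])).ne
        · intro x hx
          have hx' : γ x = γU := hx
          rw [hfdef]
          simp only [hx']
          exact mul_le_mul_of_nonneg_right (hLb x t htT).1 (Real.rpow_nonneg ht0.le _)
      have step2 : (∫ x in B, f x ∂μ) ≤ ∫ x, f x ∂μ := by
        refine setIntegral_le_integral hfint ?_
        filter_upwards with x using hfnonneg x
      have : ∫ _x in B, m * t ^ (-1 / γU) ∂μ = (μ B).toReal * (m * t ^ (-1 / γU)) := by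
        simp [setIntegral_const, smul_eq_mul, Measure.real]
      rw [this] at step1
      calc m * (μ B).toReal * t ^ (-1 / γU) = (μ B).toReal * (m * t ^ (-1 / γU)) := by ring
        _ ≤ ∫ x in B, f x ∂μ := step1
        _ ≤ ∫ x, f x ∂μ := step2
    have hnum0 : 0 ≤ ∫ x in A, f x ∂μ := integral_nonneg fun x => hfnonneg x
    have hd0 : 0 < m * (μ B).toReal * t ^ (-1 / γU) :=
      mul_pos (mul_pos hm hBpos) (Real.rpow_pos_of_pos ht0 _)
    have key : (∫ x in A, f x ∂μ) / (∫ x, f x ∂μ) ≤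
        (M * t ^ (-1 / γA)) / (m * (μ B).toReal * t ^ (-1 / γU)) := by
      exact div_le_div₀ (mul_nonneg (hm.le.trans hmM) (Real.rpow_nonneg ht0.le _)) hnum hd0 hden
    refine le_trans key (le_of_eq ?_)
    have hrw : t ^ (1 / γU - 1 / γA) = t ^ (-1 / γA) / t ^ (-1 / γU) := by
      rw [← Real.rpow_sub ht0]
      ring_nf
    rw [hCdef, hrw]
    have h1 : t ^ (-1 / γU) ≠ 0 := (Real.rpow_pos_of_pos ht0 _).ne'
    field_simp
    try ring
end

section
/- Under the assumptions of the covariate concentration lemma, for a measurable set B₁ ⊂ B with P(X ∈ B₁) > 0, one has lim_{t→∞} P(X ∈ B₁ | Y > t) = lim_{t→∞} [∫_{B₁} L(x,t) F_X(dx)] / [∫_B L(x,t) F_X(dx)], provided the latter limit exists. -/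
open MeasureTheory Filter Set

/-- Within the set `B` of covariates of maximal tail index, the limiting
conditional covariate distribution is the reweighting of `F_X` by the slowly
varying factors:  if `(∫_{B₁} L x t dμ)/(∫_B L x t dμ)` converges to `l`,
then `P(X ∈ B₁ | Y > t) → l`, where
`P(X ∈ B₁ | Y > t) = (∫_{B₁} L x t · t^(−1/γ x) dμ)/(∫ L x t · t^(−1/γ x) dμ)`. -/
theorem covariate_limit_distribution
    {𝒳 : Type*} [MeasurableSpace 𝒳] (μ : Measure 𝒳) [IsProbabilityMeasure μ]
    (γ : 𝒳 → ℝ) (L : 𝒳 → ℝ → ℝ)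
    (γL γU : ℝ) (hγL : 0 < γL)
    (hγ : ∀ x, γ x ∈ Set.Icc γL γU)
    (hγmeas : Measurable γ)
    (hLmeas : ∀ t, Measurable fun x => L x t)
    -- L uniformly bounded above and away from 0 for large t
    (hLbdd : ∃ T₀ : ℝ, ∃ m > (0:ℝ), ∃ M : ℝ, ∀ x, ∀ t ≥ T₀, m ≤ L x t ∧ L x t ≤ M)
    (hB : 0 < μ {x | γ x = γU})
    (B₁ : Set 𝒳) (hB₁meas : MeasurableSet B₁)
    (hB₁ : B₁ ⊆ {x | γ x = γU}) (hB₁pos : 0 < μ B₁)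
    (l : ℝ)
    (hlim : Tendsto (fun t : ℝ =>
        (∫ x in B₁, L x t ∂μ) / ∫ x in {x | γ x = γU}, L x t ∂μ)
      atTop (nhds l)) :
    Tendsto (fun t : ℝ =>
        (∫ x in B₁, L x t * t ^ (-1 / γ x) ∂μ) /
          ∫ x, L x t * t ^ (-1 / γ x) ∂μ)
      atTop (nhds l) := by
  obtain ⟨T₀, m, hm, M, hLb⟩ := hLbdd
  set B : Set 𝒳 := {x | γ x = γU} with hBdef
  have hBmeas : MeasurableSet B := hγmeas (measurableSet_singleton γU)
  have hγpos : ∀ x, 0 < γ x := fun x => hγL.trans_le (hγ x).1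
  have hμB : 0 < (μ B).toReal := ENNReal.toReal_pos hB.ne' (measure_ne_top μ B)
  set A : ℝ → ℝ := fun t => ∫ x in B₁, L x t ∂μ with hA
  set C : ℝ → ℝ := fun t => ∫ x in B, L x t ∂μ with hC
  set E : ℝ → ℝ := fun t => ∫ x in Bᶜ, L x t * t ^ (1/γU - 1/γ x) ∂μ with hE
  -- measurability of the weighted integrand
  have hrpow : ∀ t : ℝ, 0 < t → ∀ f : 𝒳 → ℝ, Measurable f →
      Measurable (fun x => t ^ (f x)) := by
    intro t ht f hf
    have heq : (fun x => t ^ (f x)) = fun x => Real.exp (Real.log t * f x) := by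
      funext x; rw [Real.rpow_def_of_pos ht]
    rw [heq]
    exact Real.measurable_exp.comp (measurable_const.mul hf)
  have hmeas' : ∀ t : ℝ, 0 < t → Measurable fun x => L x t * t ^ (-1 / γ x) :=
    fun t ht => (hLmeas t).mul (hrpow t ht _ (measurable_const.div hγmeas))
  have hmeasE : ∀ t : ℝ, 0 < t → Measurable fun x => L x t * t ^ (1/γU - 1/γ x) :=
    fun t ht => (hLmeas t).mul
      (hrpow t ht _ ((measurable_const.sub (measurable_const.div hγmeas))))
  -- basic bounds for large t
  have hbound : ∀ t : ℝ, max T₀ 1 ≤ t → ∀ x, ‖L x t * t ^ (-1 / γ x)‖ ≤ M := by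
    intro t ht x
    have ht1 : (1:ℝ) ≤ t := le_trans (le_max_right _ _) ht
    have ht0 : T₀ ≤ t := le_trans (le_max_left _ _) ht
    have hL := hLb x t ht0
    have hp : 0 ≤ t ^ (-1 / γ x) := Real.rpow_nonneg (by linarith) _
    have hp1 : t ^ (-1 / γ x) ≤ 1 :=
      Real.rpow_le_one_of_one_le_of_nonpos ht1
        (by
          have h1 : (0:ℝ) ≤ 1 / γ x := (one_div_pos.2 (hγpos x)).le
          linarith [neg_div (γ x) (1:ℝ)])
    have h0L : 0 ≤ L x t := le_trans hm.le hL.1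
    rw [Real.norm_of_nonneg (mul_nonneg h0L hp)]
    calc L x t * t ^ (-1 / γ x) ≤ M * 1 := by
          apply mul_le_mul hL.2 hp1 hp (le_trans h0L hL.2)
      _ = M := mul_one M
  have hboundE : ∀ t : ℝ, max T₀ 1 ≤ t → ∀ x, ‖L x t * t ^ (1/γU - 1/γ x)‖ ≤ M := by
    intro t ht x
    have ht1 : (1:ℝ) ≤ t := le_trans (le_max_right _ _) ht
    have ht0 : T₀ ≤ t := le_trans (le_max_left _ _) ht
    have hL := hLb x t ht0
    have hexp : 1/γU - 1/γ x ≤ 0 := by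
      have := one_div_le_one_div_of_le (hγpos x) (hγ x).2
      linarith
    have hp : 0 ≤ t ^ (1/γU - 1/γ x) := Real.rpow_nonneg (by linarith) _
    have hp1 : t ^ (1/γU - 1/γ x) ≤ 1 :=
      Real.rpow_le_one_of_one_le_of_nonpos ht1 hexp
    have h0L : 0 ≤ L x t := le_trans hm.le hL.1
    rw [Real.norm_of_nonneg (mul_nonneg h0L hp)]
    calc L x t * t ^ (1/γU - 1/γ x) ≤ M * 1 :=
          mul_le_mul hL.2 hp1 hp (le_trans h0L hL.2)
      _ = M := mul_one M
  -- integrability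
  have hint : ∀ t : ℝ, max T₀ 1 ≤ t → Integrable (fun x => L x t * t ^ (-1 / γ x)) μ := by
    intro t ht
    have htpos : (0:ℝ) < t := lt_of_lt_of_le one_pos (le_trans (le_max_right _ _) ht)
    exact (integrable_const M).mono' (hmeas' t htpos).aestronglyMeasurable
      (ae_of_all _ (hbound t ht))
  have hintL : ∀ t : ℝ, T₀ ≤ t → Integrable (fun x => L x t) μ := by
    intro t ht
    refine (integrable_const M).mono' (hLmeas t).aestronglyMeasurable (ae_of_all _ ?_)
    intro x
    have hL := hLb x t ht
    rw [Real.norm_of_nonneg (le_trans hm.le hL.1)]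
    exact hL.2
  -- lower bound on C
  have hClb : ∀ t : ℝ, T₀ ≤ t → m * (μ B).toReal ≤ C t := by
    intro t ht
    exact setIntegral_ge_of_const_le_real hBmeas (measure_ne_top μ B)
      (fun x _ => (hLb x t ht).1) ((hintL t ht).integrableOn)
  have hCpos : ∀ t : ℝ, T₀ ≤ t → 0 < C t := fun t ht =>
    lt_of_lt_of_le (by positivity) (hClb t ht)
  -- E tends to 0 by dominated convergence
  have hEtend : Tendsto E atTop (nhds 0) := by
    have h0 : (0:ℝ) = ∫ _x in Bᶜ, (0:ℝ) ∂μ := by simp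
    rw [h0]
    apply tendsto_integral_filter_of_dominated_convergence (fun _ => M)
    · filter_upwards [eventually_gt_atTop (0:ℝ)] with t ht
      exact (hmeasE t ht).aestronglyMeasurable
    · filter_upwards [eventually_ge_atTop (max T₀ 1)] with t ht
      exact ae_of_all _ (fun x => hboundE t ht x)
    · exact integrable_const M
    · filter_upwards [ae_restrict_mem hBmeas.compl] with x hx
      have hxlt : γ x < γU := lt_of_le_of_ne (hγ x).2 hx
      have hexp : 0 < 1/γ x - 1/γU :=
        sub_pos.2 (one_div_lt_one_div_of_lt (hγpos x) hxlt)
      have hMt : Tendsto (fun t : ℝ => M * t ^ (-(1/γ x - 1/γU))) atTop (nhds 0) := by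
        have := (tendsto_rpow_neg_atTop hexp).const_mul M
        simpa using this
      apply squeeze_zero_norm' _ hMt
      filter_upwards [eventually_ge_atTop (max T₀ 1)] with t ht
      have h := hboundE t ht x
      have hp : 0 ≤ t ^ (1/γU - 1/γ x) :=
        Real.rpow_nonneg (by linarith [le_trans (le_max_right T₀ 1) ht]) _
      have ht0 : T₀ ≤ t := le_trans (le_max_left _ _) ht
      have hL := hLb x t ht0
      have h0L : 0 ≤ L x t := le_trans hm.le hL.1
      rw [Real.norm_of_nonneg (mul_nonneg h0L hp)]
      have : (-(1/γ x - 1/γU)) = 1/γU - 1/γ x := by ring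
      rw [this]
      exact mul_le_mul_of_nonneg_right hL.2 hp
  -- E/C tends to 0
  have hEC : Tendsto (fun t => E t / C t) atTop (nhds 0) := by
    have hlim0 : Tendsto (fun t => (m * (μ B).toReal)⁻¹ * ‖E t‖) atTop (nhds 0) := by
      have := hEtend.norm.const_mul ((m * (μ B).toReal)⁻¹)
      simpa using this
    apply squeeze_zero_norm' _ hlim0
    filter_upwards [eventually_ge_atTop T₀] with t ht
    have hCl := hClb t ht
    have hCpos' := hCpos t ht
    rw [norm_div, Real.norm_of_nonneg hCpos'.le, inv_mul_eq_div]
    gcongr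
  -- the auxiliary factor tends to 1
  have hfrac : Tendsto (fun t => (1 + E t / C t)⁻¹) atTop (nhds 1) := by
    have h1 : Tendsto (fun t => 1 + E t / C t) atTop (nhds (1 + 0)) :=
      tendsto_const_nhds.add hEC
    have h := h1.inv₀ (by norm_num)
    simpa using h
  have hfinal : Tendsto (fun t => A t / C t * (1 + E t / C t)⁻¹) atTop (nhds l) := by
    have := hlim.mul hfrac
    simpa using this
  apply hfinal.congr'
  filter_upwards [eventually_ge_atTop (max T₀ 1)] with t ht
  have ht1 : (1:ℝ) ≤ t := le_trans (le_max_right _ _) ht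
  have ht0 : T₀ ≤ t := le_trans (le_max_left _ _) ht
  have htpos : (0:ℝ) < t := lt_of_lt_of_le one_pos ht1
  have hppos : (0:ℝ) < t ^ (-1/γU) := Real.rpow_pos_of_pos htpos _
  set p : ℝ := t ^ (-1/γU) with hp
  -- numerator
  have hnum : (∫ x in B₁, L x t * t ^ (-1 / γ x) ∂μ) = A t * p := by
    rw [hA, ← MeasureTheory.integral_mul_const]
    apply setIntegral_congr_fun hB₁meas
    intro x hx
    show L x t * t ^ (-1 / γ x) = L x t * t ^ (-1 / γU)
    rw [show γ x = γU from hB₁ hx]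
  -- B-part of denominator
  have hden1 : (∫ x in B, L x t * t ^ (-1 / γ x) ∂μ) = C t * p := by
    rw [hC, ← MeasureTheory.integral_mul_const]
    apply setIntegral_congr_fun hBmeas
    intro x hx
    show L x t * t ^ (-1 / γ x) = L x t * t ^ (-1 / γU)
    rw [show γ x = γU from hx]
  -- complement part of denominator
  have hden2 : (∫ x in Bᶜ, L x t * t ^ (-1 / γ x) ∂μ) = E t * p := by
    rw [hE, ← MeasureTheory.integral_mul_const]
    apply setIntegral_congr_fun hBmeas.compl
    intro x _
    show L x t * t ^ (-1 / γ x) = L x t * t ^ (1 / γU - 1 / γ x) * t ^ (-1 / γU)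
    rw [mul_assoc, ← Real.rpow_add htpos,
      show 1 / γU - 1 / γ x + -1 / γU = -1 / γ x by ring]
  have hden : (∫ x, L x t * t ^ (-1 / γ x) ∂μ) = (C t + E t) * p := by
    rw [← integral_add_compl hBmeas (hint t ht), hden1, hden2]
    ring
  have hCne : C t ≠ 0 := (hCpos t ht0).ne'
  rw [hnum, hden, mul_div_mul_right _ _ hppos.ne']
  rcases eq_or_ne (C t + E t) 0 with hCE | hCE
  · have hE' : E t / C t = -1 := by
      have : E t = -C t := by linarith
      rw [this, neg_div, div_self hCne]
    rw [hCE, hE']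
    simp
  · field_simp
end

section
/- For the Burr distribution with parameters κ, τ > 0, the tail quantile function is U(t) = (t^{1/κ} − 1)^{1/τ} for t > 1, and it admits the normalized representation U(t) = U(T)·exp(∫_T^t η(u)/u du) with η(u) = u^{1/κ}/(κτ·(u^{1/κ} − 1)), and η(u) → 1/(κτ) as u → ∞. Moreover if κ,τ range over compact subintervals of (0,∞), the convergence of η to 1/(κτ) is uniform over the parameters. -/
open MeasureTheory Filter

lemma burr_aux (κL κU τL τU : ℝ) (hκL : 0 < κL) (hτL : 0 < τL) :
    ∀ ε > (0:ℝ), ∃ N : ℝ, ∀ u > N,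
      ∀ κ' ∈ Set.Icc κL κU, ∀ τ' ∈ Set.Icc τL τU,
        |u ^ (1 / κ') / (κ' * τ' * (u ^ (1 / κ') - 1)) - 1 / (κ' * τ')| < ε := by
  intro ε hε
  set c : ℝ := max κU 1 with hc
  have hc0 : 0 < c := lt_of_lt_of_le one_pos (le_max_right _ _)
  set B : ℝ := 1 + 1 / (κL * τL * ε) with hB
  have hden : 0 < κL * τL * ε := by positivity
  have hB1 : 1 < B := by
    have h : 0 < 1 / (κL * τL * ε) := by positivity
    rw [hB]; linarith
  refine ⟨max 2 (B ^ c), ?_⟩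
  intro u hu κ' hκ' τ' hτ'
  have hκ'0 : 0 < κ' := lt_of_lt_of_le hκL hκ'.1
  have hτ'0 : 0 < τ' := lt_of_lt_of_le hτL hτ'.1
  have hu1 : 1 < u := by
    have : (2:ℝ) ≤ max 2 (B ^ c) := le_max_left _ _
    linarith
  have hu0 : 0 < u := by linarith
  -- u^(1/κ') > B
  have hexp : 1 / c ≤ 1 / κ' := by
    apply one_div_le_one_div_of_le hκ'0
    exact le_trans hκ'.2 (le_max_left _ _)
  have h1 : u ^ (1 / c) ≤ u ^ (1 / κ') :=
    Real.rpow_le_rpow_of_exponent_le (le_of_lt hu1) hexp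
  have h2 : (B ^ c) ^ (1 / c) < u ^ (1 / c) := by
    apply Real.rpow_lt_rpow (by positivity) _ (by positivity)
    exact lt_of_le_of_lt (le_max_right 2 (B ^ c)) hu
  have h3 : (B ^ c) ^ (1 / c) = B := by
    rw [← Real.rpow_mul (by linarith : (0:ℝ) ≤ B), mul_one_div_cancel (ne_of_gt hc0),
      Real.rpow_one]
  set v : ℝ := u ^ (1 / κ') with hv
  have hvB : B < v := by
    have := lt_of_lt_of_le h2 h1
    rw [h3] at this; exact this
  have hv1 : (0:ℝ) < v - 1 := by linarith
  have hvlb : 1 / (κL * τL * ε) < v - 1 := by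
    simp only [hB] at hvB; linarith
  have hkey : v / (κ' * τ' * (v - 1)) - 1 / (κ' * τ') = 1 / (κ' * τ' * (v - 1)) := by
    field_simp
    ring
  rw [hkey, abs_of_pos (by positivity)]
  -- 1/(κ'τ'(v-1)) < ε
  have hlb : 1 / ε < κ' * τ' * (v - 1) := by
    have hkt : κL * τL ≤ κ' * τ' := mul_le_mul hκ'.1 hτ'.1 (le_of_lt hτL) (le_of_lt hκ'0)
    have h5 : κL * τL * (1 / (κL * τL * ε)) < κL * τL * (v - 1) := by
      apply mul_lt_mul_of_pos_left hvlb (by positivity)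
    have h6 : κL * τL * (1 / (κL * τL * ε)) = 1 / ε := by
      field_simp
    have h7 : κL * τL * (v - 1) ≤ κ' * τ' * (v - 1) :=
      mul_le_mul_of_nonneg_right hkt (le_of_lt hv1)
    linarith
  calc 1 / (κ' * τ' * (v - 1)) < 1 / (1 / ε) :=
        one_div_lt_one_div_of_lt (by positivity) hlb
    _ = ε := one_div_one_div ε

/-- The Burr tail quantile function `U(t) = (t^{1/κ} − 1)^{1/τ}` and its
normalized representation with `η(u) = u^{1/κ}/(κτ(u^{1/κ} − 1))`, together
with the (uniform over compact parameter ranges) convergence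
`η(u) → 1/(κτ)`. -/
theorem burr_tail_quantile (κ τ : ℝ) (hκ : 0 < κ) (hτ : 0 < τ) :
    -- U is the tail quantile function of the Burr(κ,τ) distribution
    (∀ t > (1:ℝ),
      sInf {y : ℝ | 0 ≤ y ∧ 1 - 1 / t ≤ 1 - (1 + y ^ τ) ^ (-κ)} =
        (t ^ (1 / κ) - 1) ^ (1 / τ)) ∧
    -- normalized representation
    (∀ T > (1:ℝ), ∀ t ≥ T,
      (t ^ (1 / κ) - 1) ^ (1 / τ) = (T ^ (1 / κ) - 1) ^ (1 / τ) *
        Real.exp (∫ u in Set.Ioc T t,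
          (u ^ (1 / κ) / (κ * τ * (u ^ (1 / κ) - 1))) / u)) ∧
    -- η(u) → 1/(κτ)
    Tendsto (fun u : ℝ => u ^ (1 / κ) / (κ * τ * (u ^ (1 / κ) - 1)))
      atTop (nhds (1 / (κ * τ))) ∧
    -- uniform convergence over compact parameter ranges
    (∀ κL κU τL τU : ℝ, 0 < κL → 0 < τL → ∀ ε > (0:ℝ), ∃ N : ℝ, ∀ u > N,
      ∀ κ' ∈ Set.Icc κL κU, ∀ τ' ∈ Set.Icc τL τU,
        |u ^ (1 / κ') / (κ' * τ' * (u ^ (1 / κ') - 1)) - 1 / (κ' * τ')| < ε) := by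
  refine ⟨?_, ?_, ?_, ?_⟩
  · -- tail quantile
    intro t ht
    have ht0 : 0 < t := by linarith
    have htκ : 1 < t ^ (1 / κ) := Real.one_lt_rpow_iff_of_pos ht0 |>.2 (Or.inl ⟨ht, by positivity⟩)
    have hpos : 0 < t ^ (1 / κ) - 1 := by linarith
    set c : ℝ := (t ^ (1 / κ) - 1) ^ (1 / τ) with hcdef
    have hc0 : 0 < c := Real.rpow_pos_of_pos hpos _
    have hset : {y : ℝ | 0 ≤ y ∧ 1 - 1 / t ≤ 1 - (1 + y ^ τ) ^ (-κ)} = Set.Ici c := by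
      ext y
      simp only [Set.mem_setOf_eq, Set.mem_Ici]
      constructor
      · rintro ⟨hy0, hle⟩
        have h1 : (1 + y ^ τ) ^ (-κ) ≤ 1 / t := by linarith
        have hb0 : (0:ℝ) < 1 + y ^ τ := by
          have : 0 ≤ y ^ τ := Real.rpow_nonneg hy0 _
          linarith
        rw [Real.rpow_neg (le_of_lt hb0), ← one_div] at h1
        have hbk : 0 < (1 + y ^ τ) ^ κ := Real.rpow_pos_of_pos hb0 _
        have h2 : t ≤ (1 + y ^ τ) ^ κ := le_of_one_div_le_one_div hbk h1
        have h3 : t ^ (1 / κ) ≤ 1 + y ^ τ := by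
          rw [show (1:ℝ) / κ = κ⁻¹ from one_div κ]
          exact (Real.rpow_inv_le_iff_of_pos (le_of_lt ht0) (le_of_lt hb0) hκ).2 h2
        have h4 : t ^ (1 / κ) - 1 ≤ y ^ τ := by linarith
        rw [hcdef, show (1:ℝ) / τ = τ⁻¹ from one_div τ]
        exact (Real.rpow_inv_le_iff_of_pos (le_of_lt hpos) hy0 hτ).2 h4
      · intro hcy
        have hy0 : 0 ≤ y := le_trans (le_of_lt hc0) hcy
        refine ⟨hy0, ?_⟩
        rw [hcdef, show (1:ℝ) / τ = τ⁻¹ from one_div τ] at hcy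
        have h4 : t ^ (1 / κ) - 1 ≤ y ^ τ :=
          (Real.rpow_inv_le_iff_of_pos (le_of_lt hpos) hy0 hτ).1 hcy
        have hb0 : (0:ℝ) < 1 + y ^ τ := by
          have : 0 ≤ y ^ τ := Real.rpow_nonneg hy0 _
          linarith
        have h3 : t ^ (1 / κ) ≤ 1 + y ^ τ := by linarith
        have h2 : t ≤ (1 + y ^ τ) ^ κ := by
          rw [show (1:ℝ) / κ = κ⁻¹ from one_div κ] at h3
          exact (Real.rpow_inv_le_iff_of_pos (le_of_lt ht0) (le_of_lt hb0) hκ).1 h3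
        have hbk : 0 < (1 + y ^ τ) ^ κ := Real.rpow_pos_of_pos hb0 _
        have h1 : (1 + y ^ τ) ^ (-κ) ≤ 1 / t := by
          rw [Real.rpow_neg (le_of_lt hb0), ← one_div]
          exact one_div_le_one_div_of_le ht0 h2
        linarith [h1]
    rw [hset, csInf_Ici]
  · -- normalized representation
    intro T hT t hTt
    set g : ℝ → ℝ := fun u => (1 / τ) * Real.log (u ^ (1 / κ) - 1) with hg
    have hderiv : ∀ u ∈ Set.uIcc T t, HasDerivAt g
        ((u ^ (1 / κ) / (κ * τ * (u ^ (1 / κ) - 1))) / u) u := by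
      intro u hu
      rw [Set.uIcc_of_le hTt] at hu
      have hu1 : 1 < u := lt_of_lt_of_le hT hu.1
      have hu0 : 0 < u := by linarith
      have huκ : 1 < u ^ (1 / κ) := Real.one_lt_rpow_iff_of_pos hu0 |>.2 (Or.inl ⟨hu1, by positivity⟩)
      have hne : u ^ (1 / κ) - 1 ≠ 0 := by linarith
      have h1 : HasDerivAt (fun x : ℝ => x ^ (1 / κ) - 1) ((1 / κ) * u ^ (1 / κ - 1)) u := by
        simpa using (Real.hasDerivAt_rpow_const (Or.inl hu0.ne')).sub_const 1
      have h2 := (h1.log hne).const_mul (1 / τ)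
      refine h2.congr_deriv ?_
      symm
      have : u ^ (1 / κ - 1) = u ^ (1 / κ) / u := by
        rw [Real.rpow_sub hu0, Real.rpow_one]
      rw [this]
      field_simp
    have hcont : ContinuousOn (fun u : ℝ =>
        (u ^ (1 / κ) / (κ * τ * (u ^ (1 / κ) - 1))) / u) (Set.uIcc T t) := by
      apply ContinuousOn.div
      · apply ContinuousOn.div
        · exact ContinuousOn.rpow_const continuousOn_id (fun x hx => by
            rw [Set.uIcc_of_le hTt] at hx
            exact Or.inl (by nlinarith [hx.1] : x ≠ 0))
        · apply ContinuousOn.mul continuousOn_const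
          exact (ContinuousOn.rpow_const continuousOn_id (fun x hx => by
            rw [Set.uIcc_of_le hTt] at hx
            exact Or.inl (by nlinarith [hx.1] : x ≠ 0))).sub continuousOn_const
        · intro x hx
          rw [Set.uIcc_of_le hTt] at hx
          have hx1 : 1 < x := lt_of_lt_of_le hT hx.1
          have hxκ : 1 < x ^ (1 / κ) :=
            Real.one_lt_rpow_iff_of_pos (by linarith) |>.2 (Or.inl ⟨hx1, by positivity⟩)
          have : 0 < κ * τ * (x ^ (1 / κ) - 1) := by
            have : 0 < x ^ (1 / κ) - 1 := by linarith
            positivity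
          exact ne_of_gt this
      · exact continuousOn_id
      · intro x hx
        rw [Set.uIcc_of_le hTt] at hx
        exact (by nlinarith [hx.1] : x ≠ 0)
    have hint := intervalIntegral.integral_eq_sub_of_hasDerivAt hderiv
      (hcont.intervalIntegrable)
    rw [intervalIntegral.integral_of_le hTt] at hint
    rw [hint]
    have hTκ : 1 < T ^ (1 / κ) := Real.one_lt_rpow_iff_of_pos (by linarith) |>.2
      (Or.inl ⟨hT, by positivity⟩)
    have htκ : 1 < t ^ (1 / κ) := Real.one_lt_rpow_iff_of_pos (by linarith) |>.2
      (Or.inl ⟨by linarith, by positivity⟩)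
    have hUT : (T ^ (1 / κ) - 1) ^ (1 / τ) = Real.exp (g T) := by
      rw [Real.rpow_def_of_pos (by linarith), hg, mul_comm]
    have hUt : (t ^ (1 / κ) - 1) ^ (1 / τ) = Real.exp (g t) := by
      rw [Real.rpow_def_of_pos (by linarith), hg, mul_comm]
    rw [hUT, hUt, ← Real.exp_add]
    ring_nf
  · -- pointwise limit
    have haux := burr_aux κ κ τ τ hκ hτ
    rw [Metric.tendsto_atTop]
    intro ε hε
    obtain ⟨N, hN⟩ := haux ε hε
    refine ⟨N + 1, fun u hu => ?_⟩
    rw [Real.dist_eq]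
    exact hN u (by linarith) κ ⟨le_rfl, le_rfl⟩ τ ⟨le_rfl, le_rfl⟩
  · intro κL κU τL τU hκL hτL ε hε
    exact burr_aux κL κU τL τU hκL hτL ε hε
end
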